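/- arXiv:1210.6390 — 5 statements merged into one kernel-verified Lean document; each statement's English description precedes it below -/
import Mathlib

section
/- No confusion for tagged descriptions: for a tagged description D = sigma E T over a finite enumeration E of constructor tags (with decidable equality on E), if con ⟨c, a⟩ = con ⟨c, a'⟩ in Mu D then a = a', and if c ≠ c' then con ⟨c, a⟩ ≠ con ⟨c', a'⟩. -/
inductive Desc : Type 1
  | var : Desc
  | unit : Desc
  | times : Desc → Desc → Desc
  | pi : (S : Type) → (S → Desc) → Desc
  | sigma : (S : Type) → (S → Desc) → Desc

def interp : Desc → Type → Type
  | .var, X => X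
  | .unit, _ => PUnit
  | .times D₁ D₂, X => interp D₁ X × interp D₂ X
  | .pi S T, X => ∀ s : S, interp (T s) X
  | .sigma S T, X => Σ s : S, interp (T s) X

def dmap : (D : Desc) → {X Y : Type} → (X → Y) → interp D X → interp D Y
  | .var, _, _, f, x => f x
  | .unit, _, _, _, _ => PUnit.unit
  | .times D₁ D₂, _, _, f, x => (dmap D₁ f x.1, dmap D₂ f x.2)
  | .pi _ T, _, _, f, g => fun s => dmap (T s) f (g s)
  | .sigma _ T, _, _, f, x => ⟨x.1, dmap (T x.1) f x.2⟩

def Pos : (D : Desc) → interp D PUnit → Type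
  | .var, _ => PUnit
  | .unit, _ => Empty
  | .times D₁ D₂, x => Pos D₁ x.1 ⊕ Pos D₂ x.2
  | .pi S T, g => Σ s : S, Pos (T s) (g s)
  | .sigma _ T, x => Pos (T x.1) x.2

def shapeOf (D : Desc) {X : Type} (x : interp D X) : interp D PUnit :=
  dmap D (fun _ => PUnit.unit) x

def payload : (D : Desc) → {X : Type} → (x : interp D X) → Pos D (shapeOf D x) → X
  | .var, _, x, _ => x
  | .unit, _, _, p => p.elim
  | .times D₁ D₂, _, x, p =>
      match p with
      | .inl p₁ => payload D₁ x.1 p₁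
      | .inr p₂ => payload D₂ x.2 p₂
  | .pi _ T, _, g, p => payload (T p.1) (g p.1) p.2
  | .sigma _ T, _, x, p => payload (T x.1) x.2 p

inductive Mu (D : Desc) : Type
  | sup : (s : interp D PUnit) → (Pos D s → Mu D) → Mu D

def con (D : Desc) (d : interp D (Mu D)) : Mu D :=
  Mu.sup (shapeOf D d) (payload D d)

def rebuild : (D : Desc) → {X : Type} → (s : interp D PUnit) → (Pos D s → X) → interp D X
  | .var, _, _, f => f PUnit.unit
  | .unit, _, _, _ => PUnit.unit
  | .times D₁ D₂, _, s, f =>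
      (rebuild D₁ s.1 (fun p => f (.inl p)), rebuild D₂ s.2 (fun p => f (.inr p)))
  | .pi _ T, _, g, f => fun s => rebuild (T s) (g s) (fun p => f ⟨s, p⟩)
  | .sigma _ T, _, s, f => ⟨s.1, rebuild (T s.1) s.2 f⟩

theorem rebuild_eq : (D : Desc) → {X : Type} → (x : interp D X) →
    rebuild D (shapeOf D x) (payload D x) = x
  | .var, _, _ => rfl
  | .unit, _, _ => rfl
  | .times D₁ D₂, _, x => by
      simp only [rebuild, shapeOf, dmap, payload]
      exact Prod.ext (rebuild_eq D₁ x.1) (rebuild_eq D₂ x.2)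
  | .pi _ T, _, g => by
      simp only [rebuild, shapeOf, dmap, payload]
      funext s; exact rebuild_eq (T s) (g s)
  | .sigma _ T, _, x => by
      simp only [rebuild, shapeOf, dmap, payload]
      exact Sigma.ext rfl (heq_of_eq (rebuild_eq (T x.1) x.2))

theorem con_inj (D : Desc) (x y : interp D (Mu D)) (h : con D x = con D y) : x = y := by
  have hs : shapeOf D x = shapeOf D y := by
    injection h
  have hp : HEq (payload D x) (payload D y) := by
    injection h
  have hsig : (⟨shapeOf D x, payload D x⟩ : Σ s, (Pos D s → Mu D)) =
      ⟨shapeOf D y, payload D y⟩ := Sigma.ext hs hp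
  calc x = rebuild D (shapeOf D x) (payload D x) := (rebuild_eq D x).symm
    _ = rebuild D (shapeOf D y) (payload D y) :=
        congrArg (fun p : Σ s, (Pos D s → Mu D) => rebuild D p.1 p.2) hsig
    _ = y := rebuild_eq D y

/-- No confusion for tagged descriptions: constructors are injective and disjoint. -/
theorem noConfusion_tagged (E : Type) [Fintype E] [DecidableEq E]
    (T : E → Desc)
    (c c' : E)
    (a : interp (T c) (Mu (Desc.sigma E T)))
    (a' : interp (T c) (Mu (Desc.sigma E T)))
    (a'' : interp (T c') (Mu (Desc.sigma E T))) :
    (con (Desc.sigma E T) ⟨c, a⟩ = con (Desc.sigma E T) ⟨c, a'⟩ → a = a') ∧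
    (c ≠ c' → con (Desc.sigma E T) ⟨c, a⟩ ≠ con (Desc.sigma E T) ⟨c', a''⟩) := by
  constructor
  · intro h
    have := con_inj _ _ _ h
    exact eq_of_heq (Sigma.mk.inj_iff.mp this).2
  · intro hne h
    have := con_inj _ _ _ h
    exact hne (congrArg Sigma.fst this)
end

section
/- The constraint-based encoding of vectors is correct: for all A : Type and n : ℕ, the type IMu (VecConstrD A) n — where VecConstrD A n offers a nil constructor carrying a proof n = 0 and a cons constructor carrying m : ℕ, a proof n = m + 1, an element of A, and a recursive position at index m — is equivalent to Vector A n (length-indexed lists). -/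
inductive IDesc (I : Type) : Type 1
  | var : I → IDesc I
  | unit : IDesc I
  | times : IDesc I → IDesc I → IDesc I
  | pi : (S : Type) → (S → IDesc I) → IDesc I
  | sigma : (S : Type) → (S → IDesc I) → IDesc I

def iinterp {I : Type} : IDesc I → (I → Type) → Type
  | .var i, X => X i
  | .unit, _ => PUnit
  | .times A B, X => iinterp A X × iinterp B X
  | .pi S T, X => ∀ s : S, iinterp (T s) X
  | .sigma S T, X => Σ s : S, iinterp (T s) X

def imap {I : Type} : (D : IDesc I) → {X Y : I → Type} → (∀ i, X i → Y i) →
    iinterp D X → iinterp D Y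
  | .var i, _, _, f, x => f i x
  | .unit, _, _, _, _ => PUnit.unit
  | .times A B, _, _, f, x => (imap A f x.1, imap B f x.2)
  | .pi _ T, _, _, f, g => fun s => imap (T s) f (g s)
  | .sigma _ T, _, _, f, x => ⟨x.1, imap (T x.1) f x.2⟩

def IPos {I : Type} : (D : IDesc I) → iinterp D (fun _ => PUnit) → Type
  | .var _, _ => PUnit
  | .unit, _ => Empty
  | .times A B, x => IPos A x.1 ⊕ IPos B x.2
  | .pi S T, g => Σ s : S, IPos (T s) (g s)
  | .sigma _ T, x => IPos (T x.1) x.2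

def IIdx {I : Type} : (D : IDesc I) → (s : iinterp D (fun _ => PUnit)) → IPos D s → I
  | .var i, _, _ => i
  | .times A B, x, p =>
      match p with
      | .inl p₁ => IIdx A x.1 p₁
      | .inr p₂ => IIdx B x.2 p₂
  | .pi _ T, g, p => IIdx (T p.1) (g p.1) p.2
  | .sigma _ T, x, p => IIdx (T x.1) x.2 p

def ishapeOf {I : Type} (D : IDesc I) {X : I → Type} (x : iinterp D X) :
    iinterp D (fun _ => PUnit) :=
  imap D (fun _ _ => PUnit.unit) x

def ipayload {I : Type} : (D : IDesc I) → {X : I → Type} → (x : iinterp D X) →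
    (p : IPos D (ishapeOf D x)) → X (IIdx D (ishapeOf D x) p)
  | .var _, _, x, _ => x
  | .unit, _, _, p => p.elim
  | .times A B, _, x, p =>
      match p with
      | .inl p₁ => ipayload A x.1 p₁
      | .inr p₂ => ipayload B x.2 p₂
  | .pi _ T, _, g, p => ipayload (T p.1) (g p.1) p.2
  | .sigma _ T, _, x, p => ipayload (T x.1) x.2 p

inductive IMu {I : Type} (R : I → IDesc I) : I → Type
  | sup : ∀ (i : I) (s : iinterp (R i) (fun _ => PUnit)),
      (∀ p : IPos (R i) s, IMu R (IIdx (R i) s p)) → IMu R i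

def icon {I : Type} (R : I → IDesc I) (i : I) (d : iinterp (R i) (IMu R)) : IMu R i :=
  IMu.sup i (ishapeOf (R i) d) (ipayload (R i) d)

/-- Constraint-based description of vectors: nil carries a proof `n = 0`,
cons carries `m : ℕ`, a proof `n = m + 1`, an `A`, and a recursive position at `m`. -/
def VecConstrD (A : Type) (n : ℕ) : IDesc ℕ :=
  IDesc.sigma Bool (fun b =>
    if b then
      IDesc.sigma ℕ (fun m =>
        IDesc.sigma (PLift (n = m + 1)) (fun _ =>
          IDesc.sigma A (fun _ => IDesc.var m)))
    else
      IDesc.sigma (PLift (n = 0)) (fun _ => IDesc.unit))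


namespace VecConstrD

variable {A : Type}

def toVector : ∀ {n : ℕ}, IMu (VecConstrD A) n → List.Vector A n
  | _, .sup _ ⟨true, _, ⟨rfl⟩, a, _⟩ xs => a ::ᵥ toVector (xs PUnit.unit)
  | _, .sup _ ⟨false, ⟨rfl⟩, _⟩ _ => List.Vector.nil

def ofVector : ∀ {n : ℕ}, List.Vector A n → IMu (VecConstrD A) n
  | 0, _ => icon _ 0 ⟨false, ⟨rfl⟩, PUnit.unit⟩
  | n + 1, v => icon _ (n + 1) ⟨true, n, ⟨rfl⟩, v.head, ofVector v.tail⟩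

theorem toVector_ofVector : ∀ {n : ℕ} (v : List.Vector A n), toVector (ofVector v) = v
  | 0, v => v.eq_nil.symm
  | n + 1, v => by
    show v.head ::ᵥ toVector (ofVector v.tail) = v
    rw [toVector_ofVector, List.Vector.cons_head_tail]

theorem ofVector_toVector : ∀ {n : ℕ} (x : IMu (VecConstrD A) n), ofVector (toVector x) = x
  | _, .sup _ ⟨true, _, ⟨rfl⟩, _, ⟨⟩⟩ xs =>
    congrArg (IMu.sup _ _) (funext fun ⟨⟩ => ofVector_toVector (xs PUnit.unit))
  | _, .sup _ ⟨false, ⟨rfl⟩, ⟨⟩⟩ _ => congrArg (IMu.sup _ _) (funext nofun)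

def equivVector (n : ℕ) : IMu (VecConstrD A) n ≃ List.Vector A n where
  toFun := toVector
  invFun := ofVector
  left_inv := ofVector_toVector
  right_inv := toVector_ofVector

end VecConstrD

/-- The constraint-based encoding of vectors is correct. -/
theorem vecConstrD_correct (A : Type) (n : ℕ) :
    Nonempty (IMu (VecConstrD A) n ≃ List.Vector A n) :=
  ⟨VecConstrD.equivVector n⟩
end

section
/- The computation-based encoding of vectors is correct: for all A : Type and n : ℕ, the type IMu (VecCompD A) n — where VecCompD A is defined by recursion on the index, with VecCompD A 0 = unit and VecCompD A (m+1) = sigma A (fun _ => var m) — is equivalent to Vector A n. -/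
/-- Computation-based description of vectors, by recursion on the index. -/
def VecCompD (A : Type) : ℕ → IDesc ℕ
  | 0 => IDesc.unit
  | m + 1 => IDesc.sigma A (fun _ => IDesc.var m)

instance List.Vector.uniqueZero (α : Type*) : Unique (List.Vector α 0) where
  default := List.Vector.nil
  uniq := List.Vector.eq_nil

def List.Vector.consEquiv (α : Type*) (n : ℕ) : α × List.Vector α n ≃ List.Vector α (n + 1) where
  toFun x := x.1 ::ᵥ x.2
  invFun v := (v.head, v.tail)
  left_inv x := by simp
  right_inv := List.Vector.cons_head_tail

namespace VecCompD

variable (A : Type)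

instance uniqueIMuZero : Unique (IMu (VecCompD A) 0) where
  default := IMu.sup 0 PUnit.unit fun p => p.elim
  uniq := by
    rintro ⟨_, ⟨⟩, f⟩
    congr
    exact funext fun p => p.elim

def imuSuccEquiv (n : ℕ) : IMu (VecCompD A) (n + 1) ≃ A × IMu (VecCompD A) n where
  toFun | .sup _ s f => (s.1, f PUnit.unit)
  invFun x := IMu.sup (n + 1) ⟨x.1, PUnit.unit⟩ fun _ => x.2
  left_inv := by rintro ⟨_, ⟨a, ⟨⟩⟩, f⟩; rfl
  right_inv _ := rfl

def imuEquivVector : ∀ n, IMu (VecCompD A) n ≃ List.Vector A n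
  | 0 => Equiv.ofUnique _ _
  | n + 1 =>
    (imuSuccEquiv A n).trans <|
      ((Equiv.refl A).prodCongr (imuEquivVector n)).trans (List.Vector.consEquiv A n)

end VecCompD

/-- The computation-based encoding of vectors is correct. -/
theorem vecCompD_correct (A : Type) (n : ℕ) :
    Nonempty (IMu (VecCompD A) n ≃ List.Vector A n) :=
  ⟨VecCompD.imuEquivVector A n⟩
end

section
/- The two encodings of vectors are equivalent: for all A and n, IMu (VecConstrD A) n ≃ IMu (VecCompD A) n, where VecConstrD uses equality constraints on the index and VecCompD computes over the index. -/
def toComp (A : Type) : ∀ n, IMu (VecConstrD A) n → IMu (VecCompD A) n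
  | n, .sup _ s k =>
    match s, k with
    | ⟨true, m, ⟨h⟩, a, _⟩, k =>
      h ▸ (IMu.sup (m+1)
        (show iinterp (VecCompD A (m+1)) (fun _ => PUnit) from ⟨a, PUnit.unit⟩)
        (fun _ => toComp A m (k PUnit.unit)))
    | ⟨false, ⟨h⟩, _⟩, _ =>
      h ▸ IMu.sup 0
        (show iinterp (VecCompD A 0) (fun _ => PUnit) from PUnit.unit)
        (fun p => p.elim)

def toConstr (A : Type) : ∀ n, IMu (VecCompD A) n → IMu (VecConstrD A) n
  | 0, _ => IMu.sup 0 ⟨false, ⟨rfl⟩, PUnit.unit⟩ (fun p => p.elim)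
  | m+1, .sup _ s k =>
      IMu.sup (m+1) ⟨true, m, ⟨rfl⟩, s.1, PUnit.unit⟩
        (fun _ => toConstr A m (k PUnit.unit))

theorem comp_constr_comp (A : Type) : ∀ n (x : IMu (VecCompD A) n),
    toComp A n (toConstr A n x) = x
  | 0, .sup _ s k => by
      simp only [toConstr, toComp]
      congr 1
      funext p
      exact p.elim
  | m+1, .sup _ s k => by
      simp only [toConstr, toComp]
      congr 1
      funext p
      exact comp_constr_comp A m (k PUnit.unit)

theorem constr_comp_constr (A : Type) : ∀ n (x : IMu (VecConstrD A) n),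
    toConstr A n (toComp A n x) = x
  | n, .sup _ s k => by
      match s, k with
      | ⟨true, m, ⟨h⟩, a, _⟩, k =>
        subst h
        simp only [toComp, toConstr]
        congr 1
        funext p
        exact constr_comp_constr A m (k PUnit.unit)
      | ⟨false, ⟨h⟩, _⟩, k =>
        subst h
        simp only [toComp, toConstr]
        congr 1
        funext p
        exact p.elim

/-- The two encodings of vectors are equivalent. -/
theorem vec_encodings_equiv (A : Type) (n : ℕ) :
    Nonempty (IMu (VecConstrD A) n ≃ IMu (VecCompD A) n) := by
  exact ⟨⟨toComp A n, toConstr A n, constr_comp_constr A n, comp_constr_comp A n⟩⟩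
end

section
/- The non-indexed universe embeds into the indexed one: there is a translation t : Desc → IDesc PUnit such that for every D : Desc and X : Type, ⟦D⟧X ≃ ⟦t D⟧(fun _ => X), and consequently Mu D ≃ IMu (fun _ => t D) PUnit.unit. -/
def descToIDesc : Desc → IDesc PUnit
  | .var => IDesc.var PUnit.unit
  | .unit => IDesc.unit
  | .times D₁ D₂ => IDesc.times (descToIDesc D₁) (descToIDesc D₂)
  | .pi S T => IDesc.pi S (fun s => descToIDesc (T s))
  | .sigma S T => IDesc.sigma S (fun s => descToIDesc (T s))

/-!
Both fixed points are W-types: `Mu D` is the W-type of the container with shapes `interp D PUnit`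
and positions `Pos D`, and the `PUnit`-indexed `IMu` of `descToIDesc D` is the W-type of the
container with shapes `iinterp (descToIDesc D) (fun _ => PUnit)` and positions
`IPos (descToIDesc D)`. Both containers are built from those of the subdescriptions by the same
product, Π and Σ operations, so the translation preserves the container on the nose; the two
W-types are then equal and the equivalence of fixed points is a cast between them.
-/

theorem interp_eq_iinterp_descToIDesc (D : Desc) (X : Type) :
    interp D X = iinterp (descToIDesc D) (fun _ => X) := by
  induction D with
  | var | unit => rfl
  | times _ _ ih₁ ih₂ => exact congrArg₂ Prod ih₁ ih₂
  | pi _ _ ih => exact congrArg (fun F => ∀ s, F s) (funext ih)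
  | sigma _ _ ih => exact congrArg (fun F => Σ s, F s) (funext ih)

universe u

namespace PFunctor

def prod (P Q : PFunctor.{u, u}) : PFunctor.{u, u} :=
  ⟨P.A × Q.A, fun a => P.B a.1 ⊕ Q.B a.2⟩

def pi {S : Type u} (P : S → PFunctor.{u, u}) : PFunctor.{u, u} :=
  ⟨∀ s, (P s).A, fun a => Σ s, (P s).B (a s)⟩

def sigma {S : Type u} (P : S → PFunctor.{u, u}) : PFunctor.{u, u} :=
  ⟨Σ s, (P s).A, fun a => (P a.1).B a.2⟩

end PFunctor

def Desc.pfunctor (D : Desc) : PFunctor :=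
  ⟨interp D PUnit, Pos D⟩

def IDesc.pfunctor (R : IDesc PUnit) : PFunctor :=
  ⟨iinterp R (fun _ => PUnit), IPos R⟩

theorem Desc.pfunctor_eq_descToIDesc (D : Desc) :
    D.pfunctor = (descToIDesc D).pfunctor := by
  induction D with
  | var | unit => rfl
  | times _ _ ih₁ ih₂ => exact congrArg₂ PFunctor.prod ih₁ ih₂
  | pi _ _ ih => exact congrArg PFunctor.pi (funext ih)
  | sigma _ _ ih => exact congrArg PFunctor.sigma (funext ih)

def Mu.toWType {D : Desc} : Mu D → WType (Pos D)
  | .sup s f => ⟨s, fun p => (f p).toWType⟩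

def Mu.ofWType {D : Desc} : WType (Pos D) → Mu D
  | ⟨s, f⟩ => .sup s fun p => Mu.ofWType (f p)

def Mu.equivWType (D : Desc) : Mu D ≃ WType (Pos D) where
  toFun := Mu.toWType
  invFun := Mu.ofWType
  left_inv m := by
    induction m with
    | sup s f ih => exact congrArg (Mu.sup s) (funext ih)
  right_inv w := by
    induction w with
    | mk s f ih => exact congrArg (WType.mk s) (funext ih)

def IMu.toWType {R : IDesc PUnit} : ∀ {i}, IMu (fun _ => R) i → WType (IPos R)
  | _, .sup _ s f => ⟨s, fun p => (f p).toWType⟩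

-- `IMu _ (IIdx R s p)` and `IMu _ PUnit.unit` agree by definitional eta for `PUnit`.
def IMu.ofWType {R : IDesc PUnit} : WType (IPos R) → IMu (fun _ => R) PUnit.unit
  | ⟨s, f⟩ => .sup _ s fun p => IMu.ofWType (f p)

theorem IMu.ofWType_toWType {R : IDesc PUnit} {i : PUnit} (m : IMu (fun _ => R) i) :
    IMu.ofWType m.toWType = m := by
  induction m with
  | sup _ s f ih => exact congrArg (@IMu.sup _ (fun _ => R) _ s) (funext ih)

def IMu.equivWType (R : IDesc PUnit) : IMu (fun _ => R) PUnit.unit ≃ WType (IPos R) where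
  toFun := IMu.toWType
  invFun := IMu.ofWType
  left_inv := IMu.ofWType_toWType
  right_inv w := by
    induction w with
    | mk s f ih => exact congrArg (WType.mk s) (funext ih)

/-- The non-indexed universe embeds into the indexed one. -/
theorem desc_embeds (D : Desc) :
    (∀ X : Type, Nonempty (interp D X ≃ iinterp (descToIDesc D) (fun _ => X))) ∧
    Nonempty (Mu D ≃ IMu (fun _ : PUnit => descToIDesc D) PUnit.unit) := by
  refine ⟨fun X => ⟨Equiv.cast (interp_eq_iinterp_descToIDesc D X)⟩, ⟨?_⟩⟩
  have hW : WType (Pos D) = WType (IPos (descToIDesc D)) :=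
    congrArg (fun P : PFunctor => WType P.B) D.pfunctor_eq_descToIDesc
  exact (Mu.equivWType D).trans ((Equiv.cast hW).trans (IMu.equivWType _).symm)
end
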